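/- Let j < d and let I = {i_1 < ⋯ < i_r} ⊆ {j+1,…,d}. Define, for x = [x_0 : ⋯ : x_d] in projective d-space over a nonarchimedean field, the sets V(j+1;ε) = {x : |x_{j+1}| > |x_l|·ε for all l < j+1} and, for k > j+1, V(k;ε) = {x : |x_k| > |x_l|·ε for all l < j+1 and |x_k| > |x_l| for all j+1 ≤ l < k}. Then the map sending [x_0:⋯:x_d] to the tuple (y_0,…,y_{d-1}) with y_i = x_i/x_{i_m} where i_m is the smallest element of I exceeding i (and y_i = x_i/x_{i_r} for i > i_r) is a bijection from ∩_{k∈I} V(k;ε) onto B^-(1/ε)^{j+1} × B^-(1)^{i_1−1−j} × ∏_{m=2}^{r} ( C^-(0,1) × B^-(1)^{i_m − i_{m−1} − 1} ) × 𝔸^{d − i_r}, where B^-(δ) = {z : |z| < δ}, C^-(0,1) = {z : 0 < |z| < 1}, and 𝔸 denotes the affine line. -/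

import Mathlib

/-!
Write `σ(i)` for the first `i_k` above `i` (or `i_r` when there is none). For `i < i_r` we have
`i < σ(i)`, and the conditions defining `⋂_{k ∈ I} V(k;ε)` bound `|x_i|` (or `ε |x_i|` when
`i ≤ j`) by `|x_{σ(i)}|`; dividing by `x_{σ(i)}` gives exactly the bounds of the target.
Conversely `x_i = y_i ∏_{i < i_k} y_{i_k}` is a preimage of `y`, and it lies in the source because
every factor `y_{i_k}` has norm at most `1`. Two points with the same image are proportional, by
descending induction along `σ`, since equal images mean `x_i x'_{σ(i)} = x'_i x_{σ(i)}`.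
-/

namespace Stmt4

variable {K : Type*} [NormedField K]

/-- The set `V(k;ε)` in homogeneous coordinates:
`|x_k| > ε·|x_l|` for all `l ≤ j`, and `|x_k| > |x_l|` for all `j+1 ≤ l < k`
(for `k = j+1` the second condition is vacuous, recovering `V(j+1;ε)`). -/
def Vset (K : Type*) [NormedField K] (d j : ℕ) (ε : ℝ) (k : Fin (d + 1)) :
    Set (Fin (d + 1) → K) :=
  {x | (∀ l : Fin (d + 1), (l : ℕ) ≤ j → ε * ‖x l‖ < ‖x k‖) ∧
       (∀ l : Fin (d + 1), j < (l : ℕ) → (l : ℕ) < (k : ℕ) → ‖x l‖ < ‖x k‖)}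

/-- The intersection `⋂_{k ∈ I} V(k;ε)` for `I = {ι 0 < ⋯ < ι (r-1)}`. -/
def Sset (K : Type*) [NormedField K] (d j r : ℕ) (ε : ℝ)
    (ι : Fin r → Fin (d + 1)) : Set (Fin (d + 1) → K) :=
  ⋂ m : Fin r, Vset K d j ε (ι m)

/-- `σ i` = the smallest element `i_m` of `I` exceeding `i` (and `i_r` if there is
none). -/
noncomputable def sig (d r : ℕ) (ι : Fin r → Fin (d + 1)) (hr : 0 < r)
    (i : Fin (d + 1)) : Fin (d + 1) :=
  if h : ∃ m : Fin r, (i : ℕ) < ((ι m : Fin (d + 1)) : ℕ) then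
    ι ((Finset.univ.filter (fun m : Fin r => (i : ℕ) < ((ι m : Fin (d + 1)) : ℕ))).min'
      (by obtain ⟨m, hm⟩ := h
          exact ⟨m, Finset.mem_filter.mpr ⟨Finset.mem_univ m, hm⟩⟩))
  else ι ⟨r - 1, by omega⟩

/-- The coordinate map `ψ(x)_i = x_i / x_{σ(i)}` of Lemma 1.5. -/
noncomputable def psi (d r : ℕ) (ι : Fin r → Fin (d + 1)) (hr : 0 < r)
    (x : Fin (d + 1) → K) : Fin (d + 1) → K :=
  fun i => x i / x (sig d r ι hr i)

/-- The target: `B⁻(1/ε)^{j+1} × B⁻(1)^{i₁-1-j} × ∏_{m=2}^r (C⁻(0,1) × B⁻(1)^{i_m-i_{m-1}-1}) × 𝔸^{d-i_r}`,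
realized inside `K^{d+1}` by normalizing the coordinate at `i_r` to `1`. -/
def Tset (K : Type*) [NormedField K] (d j r : ℕ) (ε : ℝ)
    (ι : Fin r → Fin (d + 1)) (hr : 0 < r) : Set (Fin (d + 1) → K) :=
  {y | y (ι ⟨r - 1, by omega⟩) = 1 ∧
    (∀ i : Fin (d + 1), (i : ℕ) ≤ j → ‖y i‖ < 1 / ε) ∧
    (∀ i : Fin (d + 1), j < (i : ℕ) → (i : ℕ) < ((ι ⟨0, hr⟩ : Fin (d + 1)) : ℕ) →
      ‖y i‖ < 1) ∧
    (∀ m : ℕ, ∀ hm : m + 1 < r,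
      (0 < ‖y (ι ⟨m, by omega⟩)‖ ∧ ‖y (ι ⟨m, by omega⟩)‖ < 1) ∧
      ∀ i : Fin (d + 1), ((ι ⟨m, by omega⟩ : Fin (d + 1)) : ℕ) < (i : ℕ) →
        (i : ℕ) < ((ι ⟨m + 1, hm⟩ : Fin (d + 1)) : ℕ) → ‖y i‖ < 1)}

theorem eq_smul_of_div_comp_eq {α K : Type*} [Preorder α] [WellFoundedGT α] [Field K]
    {σ : α → α} {L : α} (hσ : ∀ i, σ i = L ∨ i < σ i) {x x' : α → K}
    (hx : ∀ i, x (σ i) ≠ 0) (hx' : ∀ i, x' (σ i) ≠ 0) (hL : x L ≠ 0)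
    (h : ∀ i, x i / x (σ i) = x' i / x' (σ i)) : x' = (x' L / x L) • x := by
  have cross : ∀ i, x' i * x L = x i * x' L := by
    intro i
    induction i using WellFoundedGT.induction with
    | _ i ih =>
      have hi := h i
      rw [div_eq_div_iff (hx i) (hx' i)] at hi
      rcases hσ i with hσL | hlt
      · rw [hσL] at hi
        linear_combination -hi
      · apply mul_left_cancel₀ (hx i)
        linear_combination (-x L) * hi + x i * ih _ hlt
  funext i
  rw [Pi.smul_apply, smul_eq_mul, div_mul_eq_mul_div, eq_div_iff hL, cross, mul_comm]

theorem norm_prod_le_norm_prod_of_subset {α K : Type*} [NormedField K] [DecidableEq α]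
    {s t : Finset α} (hst : s ⊆ t) {f : α → K} (hf : ∀ a ∈ t \ s, ‖f a‖ ≤ 1) :
    ‖∏ a ∈ t, f a‖ ≤ ‖∏ a ∈ s, f a‖ := by
  rw [← Finset.prod_sdiff hst, norm_mul]
  refine mul_le_of_le_one_left (norm_nonneg _) ?_
  rw [norm_prod]
  exact Finset.prod_le_one (fun _ _ => norm_nonneg _) hf

section Sig

variable {d r : ℕ} {ι : Fin r → Fin (d + 1)} {hr : 0 < r} {i : Fin (d + 1)}

theorem exists_sig_eq_of_lt {m : Fin r} (h : i < ι m) :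
    ∃ n, sig d r ι hr i = ι n ∧ i < ι n ∧ ∀ k, i < ι k → n ≤ k := by
  have hex : ∃ m : Fin r, (i : ℕ) < ι m := ⟨m, h⟩
  unfold sig
  rw [dif_pos hex]
  refine ⟨_, rfl, ?_, fun k hk => Finset.min'_le _ _ (by simpa using hk)⟩
  exact (Finset.mem_filter.mp (Finset.min'_mem (Finset.univ.filter fun m : Fin r => (i : ℕ) < ι m)
    ⟨m, by simpa using h⟩)).2

theorem sig_of_forall_le (h : ∀ m, ι m ≤ i) : sig d r ι hr i = ι ⟨r - 1, by omega⟩ :=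
  dif_neg (by simpa using h)

theorem sig_eq_last_or_lt_sig : sig d r ι hr i = ι ⟨r - 1, by omega⟩ ∨ i < sig d r ι hr i := by
  by_cases h : ∃ m, i < ι m
  · obtain ⟨m, hm⟩ := h
    obtain ⟨n, hn, hin, -⟩ := exists_sig_eq_of_lt (hr := hr) hm
    exact Or.inr (hn ▸ hin)
  · simp only [not_exists, not_lt] at h
    exact Or.inl (sig_of_forall_le h)

theorem sig_mem_range : sig d r ι hr i ∈ Set.range ι := by
  by_cases h : ∃ m, i < ι m
  · obtain ⟨m, hm⟩ := h
    obtain ⟨n, hn, -⟩ := exists_sig_eq_of_lt (hr := hr) hm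
    exact ⟨n, hn.symm⟩
  · simp only [not_exists, not_lt] at h
    exact ⟨_, (sig_of_forall_le h).symm⟩

end Sig

section Source

variable {d j r : ℕ} {ε : ℝ} {ι : Fin r → Fin (d + 1)} {x : Fin (d + 1) → K}

theorem mem_Vset_of_mem_Sset (hx : x ∈ Sset K d j r ε ι) (m : Fin r) :
    x ∈ Vset K d j ε (ι m) :=
  Set.mem_iInter.mp hx m

theorem apply_ne_zero_of_mem_Sset (hε : 0 ≤ ε) (hx : x ∈ Sset K d j r ε ι) (m : Fin r) :
    x (ι m) ≠ 0 := by
  have h := (mem_Vset_of_mem_Sset hx m).1 0 (by simp)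
  exact norm_pos_iff.mp ((mul_nonneg hε (norm_nonneg _)).trans_lt h)

theorem mul_norm_psi_lt_one (hε : 0 ≤ ε) (hr : 0 < r) (hx : x ∈ Sset K d j r ε ι)
    {i : Fin (d + 1)} {m : Fin r} (hi : i < ι m) {c : ℝ}
    (hc : ∀ n, i < ι n → c * ‖x i‖ < ‖x (ι n)‖) : c * ‖psi d r ι hr x i‖ < 1 := by
  obtain ⟨n, hn, hin, -⟩ := exists_sig_eq_of_lt (hr := hr) hi
  have hpos := norm_pos_iff.mpr (apply_ne_zero_of_mem_Sset hε hx n)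
  rw [psi, hn, norm_div, mul_div_assoc', div_lt_one hpos]
  exact hc n hin

theorem psi_mem_Tset (hε : 0 < ε) (hr : 0 < r) (hmono : StrictMono ι)
    (hι0 : j + 1 ≤ ((ι ⟨0, hr⟩ : Fin (d + 1)) : ℕ)) (hx : x ∈ Sset K d j r ε ι) :
    psi d r ι hr x ∈ Tset K d j r ε ι hr := by
  have hι_le_last : ∀ m, ι m ≤ ι ⟨r - 1, by omega⟩ :=
    fun m => hmono.monotone (Fin.le_def.mpr (by simp; omega))
  have hj_lt : ∀ m, j < (ι m : ℕ) := fun m =>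
    Nat.lt_of_succ_le (hι0.trans (Fin.le_def.mp (hmono.monotone (Fin.le_def.mpr (by simp)))))
  have norm_lt_one : ∀ (i : Fin (d + 1)) (m : Fin r), j < (i : ℕ) → i < ι m →
      ‖psi d r ι hr x i‖ < 1 := fun i m hji him => by
    simpa using mul_norm_psi_lt_one (c := 1) hε.le hr hx him
      fun n hin => by simpa using (mem_Vset_of_mem_Sset hx n).2 i hji hin
  refine ⟨?_, fun i hi => ?_, fun i hji hi0 => norm_lt_one i _ hji hi0,
    fun m hm => ⟨⟨?_, norm_lt_one _ ⟨m + 1, hm⟩ (hj_lt _) (hmono (by simp))⟩,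
      fun i hmi hi => norm_lt_one i _ ((hj_lt _).trans hmi) hi⟩⟩
  · rw [psi, sig_of_forall_le hι_le_last]
    exact div_self (apply_ne_zero_of_mem_Sset hε.le hx _)
  · rw [lt_div_iff₀ hε, mul_comm]
    exact mul_norm_psi_lt_one hε.le hr hx (m := ⟨0, hr⟩) (Fin.lt_def.mpr (by omega))
      fun n _ => (mem_Vset_of_mem_Sset hx n).1 i hi
  · obtain ⟨n, hn⟩ := sig_mem_range (hr := hr) (i := ι ⟨m, by omega⟩)
    rw [psi, ← hn, norm_div]
    exact div_pos (norm_pos_iff.mpr (apply_ne_zero_of_mem_Sset hε.le hx _))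
      (norm_pos_iff.mpr (apply_ne_zero_of_mem_Sset hε.le hx n))

theorem psi_eq_psi_iff (hε : 0 ≤ ε) (hr : 0 < r) {x' : Fin (d + 1) → K} (hx : x ∈ Sset K d j r ε ι)
    (hx' : x' ∈ Sset K d j r ε ι) :
    psi d r ι hr x = psi d r ι hr x' ↔ ∃ c : K, c ≠ 0 ∧ x' = c • x := by
  have apply_sig_ne_zero : ∀ z ∈ Sset K d j r ε ι, ∀ i, z (sig d r ι hr i) ≠ 0 := by
    intro z hz i
    obtain ⟨n, hn⟩ := sig_mem_range (hr := hr) (i := i)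
    exact hn ▸ apply_ne_zero_of_mem_Sset hε hz n
  constructor
  · intro h
    have hL := apply_ne_zero_of_mem_Sset hε hx ⟨r - 1, by omega⟩
    exact ⟨_, div_ne_zero (apply_ne_zero_of_mem_Sset hε hx' _) hL,
      eq_smul_of_div_comp_eq (fun _ => sig_eq_last_or_lt_sig) (apply_sig_ne_zero x hx)
        (apply_sig_ne_zero x' hx') hL (congrFun h)⟩
  · rintro ⟨c, hc, rfl⟩
    funext i
    exact (mul_div_mul_left _ _ hc).symm

end Source

section Target

variable {d j r : ℕ} {ε : ℝ} {ι : Fin r → Fin (d + 1)} {hr : 0 < r} {y : Fin (d + 1) → K}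

theorem norm_apply_iota_of_mem_Tset (hy : y ∈ Tset K d j r ε ι hr) (k : Fin r) :
    0 < ‖y (ι k)‖ ∧ ‖y (ι k)‖ ≤ 1 := by
  by_cases hk : (k : ℕ) + 1 < r
  · exact ⟨(hy.2.2.2 k hk).1.1, (hy.2.2.2 k hk).1.2.le⟩
  · have hk : k = ⟨r - 1, by omega⟩ := Fin.ext (by simp; omega)
    simp [hk, hy.1]

theorem apply_iota_ne_zero_of_mem_Tset (hy : y ∈ Tset K d j r ε ι hr) (k : Fin r) :
    y (ι k) ≠ 0 :=
  norm_pos_iff.mp (norm_apply_iota_of_mem_Tset hy k).1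

theorem norm_lt_one_of_mem_Tset (hy : y ∈ Tset K d j r ε ι hr) {i : Fin (d + 1)}
    (hji : j < (i : ℕ)) (hi : i < ι ⟨r - 1, by omega⟩) : ‖y i‖ < 1 := by
  obtain ⟨⟨_ | m, hn⟩, -, hin, hmin⟩ := exists_sig_eq_of_lt (hr := hr) hi
  · exact hy.2.2.1 i hji hin
  · have hle : ι ⟨m, by omega⟩ ≤ i := not_lt.mp fun h => by simpa using hmin _ h
    rcases hle.eq_or_lt with heq | hlt
    · exact heq ▸ (hy.2.2.2 m hn).1.2
    · exact (hy.2.2.2 m hn).2 i hlt hin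

/-- Normalized by `x_{i_r} = 1`, whereas the paper's inverse has `x_{i_1} = 1`; the two differ
by a scalar. -/
noncomputable def psiInv (ι : Fin r → Fin (d + 1)) (y : Fin (d + 1) → K) : Fin (d + 1) → K :=
  fun i => y i * ∏ k with i < ι k, y (ι k)

theorem psiInv_iota (hmono : StrictMono ι) (m : Fin r) :
    psiInv ι y (ι m) = ∏ k ∈ Finset.Ici m, y (ι k) := by
  rw [psiInv, ← Finset.mul_prod_Ioi_eq_prod_Ici]
  congr 2
  ext k
  simp [hmono.lt_iff_lt]

theorem psiInv_sig (hmono : StrictMono ι) (hy : y (ι ⟨r - 1, by omega⟩) = 1) (i : Fin (d + 1)) :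
    psiInv ι y (sig d r ι hr i) = ∏ k with i < ι k, y (ι k) := by
  by_cases h : ∃ m, i < ι m
  · obtain ⟨m, hm⟩ := h
    obtain ⟨n, hn, hin, hmin⟩ := exists_sig_eq_of_lt (hr := hr) hm
    rw [hn, psiInv_iota hmono]
    congr 1
    ext k
    simpa using ⟨fun hk => hin.trans_le (hmono.monotone hk), hmin k⟩
  · simp only [not_exists, not_lt] at h
    have hι_le_last : ∀ k, ι k ≤ ι ⟨r - 1, by omega⟩ :=
      fun k => hmono.monotone (Fin.le_def.mpr (by simp; omega))
    rw [sig_of_forall_le h, psiInv, hy, one_mul, Finset.prod_eq_one, Finset.prod_eq_one]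
    · simpa using fun k hk => absurd (h k) hk.not_ge
    · simpa using fun k hk => absurd (hι_le_last k) hk.not_ge

theorem psi_psiInv (hmono : StrictMono ι) (hy : y ∈ Tset K d j r ε ι hr) :
    psi d r ι hr (psiInv ι y) = y := by
  funext i
  rw [psi, psiInv_sig hmono hy.1, psiInv, mul_div_cancel_right₀]
  exact Finset.prod_ne_zero_iff.mpr fun k _ => apply_iota_ne_zero_of_mem_Tset hy k

theorem mul_norm_psiInv_lt (hmono : StrictMono ι) (hy : y ∈ Tset K d j r ε ι hr)
    {l : Fin (d + 1)} {m : Fin r} (hl : l < ι m) {c : ℝ} (hc : c * ‖y l‖ < 1) :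
    c * ‖psiInv ι y l‖ < ‖psiInv ι y (ι m)‖ := by
  have hQ : 0 < ‖∏ k with l < ι k, y (ι k)‖ := norm_pos_iff.mpr
    (Finset.prod_ne_zero_iff.mpr fun k _ => apply_iota_ne_zero_of_mem_Tset hy k)
  calc c * ‖psiInv ι y l‖ = c * ‖y l‖ * ‖∏ k with l < ι k, y (ι k)‖ := by
        rw [psiInv, norm_mul, mul_assoc]
    _ < ‖∏ k with l < ι k, y (ι k)‖ := mul_lt_of_lt_one_left hQ hc
    _ ≤ ‖psiInv ι y (ι m)‖ := by
        rw [psiInv_iota hmono]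
        refine norm_prod_le_norm_prod_of_subset (fun k hk => ?_)
          fun k _ => (norm_apply_iota_of_mem_Tset hy k).2
        simpa using hl.trans_le (hmono.monotone (Finset.mem_Ici.mp hk))

theorem psiInv_mem_Sset (hε : 0 < ε) (hmono : StrictMono ι)
    (hι0 : j + 1 ≤ ((ι ⟨0, hr⟩ : Fin (d + 1)) : ℕ)) (hy : y ∈ Tset K d j r ε ι hr) :
    psiInv ι y ∈ Sset K d j r ε ι := by
  refine Set.mem_iInter.mpr fun m => ⟨fun l hl => ?_, fun l hjl hlm => ?_⟩
  · have hι0m := Fin.le_def.mp (hmono.monotone (Fin.le_def.mpr (Nat.zero_le m)) :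
      ι ⟨0, hr⟩ ≤ ι m)
    refine mul_norm_psiInv_lt hmono hy (Fin.lt_def.mpr (by omega)) ?_
    rw [mul_comm, ← lt_div_iff₀ hε]
    exact hy.2.1 l hl
  · have hlast : ι m ≤ ι ⟨r - 1, by omega⟩ := hmono.monotone (Fin.le_def.mpr (by simp; omega))
    simpa using mul_norm_psiInv_lt (c := 1) hmono hy hlm
      (by simpa using norm_lt_one_of_mem_Tset hy hjl (lt_of_lt_of_le hlm hlast))

end Target

theorem stmt_4_general (d j r : ℕ) (ε : ℝ) (hε : 0 < ε)
    (ι : Fin r → Fin (d + 1)) (hr : 0 < r) (hmono : StrictMono ι)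
    (hι0 : j + 1 ≤ ((ι ⟨0, hr⟩ : Fin (d + 1)) : ℕ)) :
    (∀ x ∈ Sset K d j r ε ι, psi d r ι hr x ∈ Tset K d j r ε ι hr) ∧
    (∀ y ∈ Tset K d j r ε ι hr, ∃ x ∈ Sset K d j r ε ι, psi d r ι hr x = y) ∧
    (∀ x ∈ Sset K d j r ε ι, ∀ x' ∈ Sset K d j r ε ι,
      (psi d r ι hr x = psi d r ι hr x' ↔ ∃ c : K, c ≠ 0 ∧ x' = c • x)) := by
  refine ⟨fun x hx => psi_mem_Tset hε hr hmono hι0 hx,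
    fun y hy => ⟨psiInv ι y, psiInv_mem_Sset hε hmono hι0 hy, psi_psiInv hmono hy⟩,
    fun x hx x' hx' => psi_eq_psi_iff hε.le hr hx hx'⟩

/-- (Lemma 1.5.) For `I = {i₁ < ⋯ < i_r} ⊆ {j+1,…,d}` the map `ψ`
induces a bijection from `⋂_{k∈I} V(k;ε)` modulo scaling onto
`B⁻(1/ε)^{j+1} × B⁻(1)^{i₁-1-j} × ∏_{m=2}^r (C⁻(0,1) × B⁻(1)^{i_m-i_{m-1}-1}) × 𝔸^{d-i_r}`:
`ψ` maps the source into the target, is onto the target, and identifies exactly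
the points differing by a scalar. -/
theorem stmt_4 (d j r : ℕ) (ε : ℝ) (hε : 0 < ε) (hjd : j + 1 ≤ d)
    (ι : Fin r → Fin (d + 1)) (hr : 0 < r) (hmono : StrictMono ι)
    (hι0 : j + 1 ≤ ((ι ⟨0, hr⟩ : Fin (d + 1)) : ℕ)) :
    (∀ x ∈ Sset K d j r ε ι, psi d r ι hr x ∈ Tset K d j r ε ι hr) ∧
    (∀ y ∈ Tset K d j r ε ι hr, ∃ x ∈ Sset K d j r ε ι, psi d r ι hr x = y) ∧
    (∀ x ∈ Sset K d j r ε ι, ∀ x' ∈ Sset K d j r ε ι,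
      (psi d r ι hr x = psi d r ι hr x' ↔ ∃ c : K, c ≠ 0 ∧ x' = c • x)) :=
  stmt_4_general d j r ε hε ι hr hmono hι0

end Stmt4
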